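/- Let f be a Boolean function on n bits and p ∈ (0,1). Then b(f,π_p) = s(f,π_p) if and only if f or 1−f is the parity function on some subset of the bits (equivalently, there is S ⊆ [n] and ε ∈ {0,1} with f(x) = ε ⊕ (⊕_{i∈S} x_i) for all x). -/

import Mathlib

open Classical

noncomputable section

/-- Flip the bits of `x` in the set `B`. -/
def flipOn {ι : Type*} [DecidableEq ι] (x : ι → Bool) (B : Finset ι) : ι → Bool :=
  fun i => if i ∈ B then !(x i) else x i

/-- Pointwise sensitivity of `f` at `x`. -/
def sensAt {ι : Type*} [Fintype ι] [DecidableEq ι] (f : (ι → Bool) → Bool)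
    (x : ι → Bool) : ℕ :=
  (Finset.univ.filter fun i => f (flipOn x {i}) ≠ f x).card

/-- Pointwise block sensitivity of `f` at `x`. -/
def bsAt {ι : Type*} [DecidableEq ι] (f : (ι → Bool) → Bool) (x : ι → Bool) : ℕ :=
  sSup {m | ∃ B : Fin m → Finset ι,
    (∀ j, f (flipOn x (B j)) ≠ f x) ∧ ∀ j k, j ≠ k → Disjoint (B j) (B k)}

/-- `W` is a witness set for `f` at `x`. -/
def IsWitness {ι : Type*} (f : (ι → Bool) → Bool) (x : ι → Bool) (W : Finset ι) : Prop :=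
  ∀ y, (∀ i ∈ W, y i = x i) → f y = f x

/-- Pointwise minimum witness size of `f` at `x`. -/
def witAt {ι : Type*} (f : (ι → Bool) → Bool) (x : ι → Bool) : ℕ :=
  sInf {k | ∃ W : Finset ι, W.card = k ∧ IsWitness f x W}

/-- Decision trees querying coordinates in `ι`. -/
inductive DTree (ι : Type*) where
  | leaf : DTree ι
  | node : ι → DTree ι → DTree ι → DTree ι

/-- The set of coordinates queried by the tree `T` on input `x`. -/
def DTree.path {ι : Type*} [DecidableEq ι] : DTree ι → (ι → Bool) → Finset ι
  | .leaf, _ => ∅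
  | .node i t0 t1, x => insert i (if x i then t1.path x else t0.path x)

/-- The tree `T` determines `f`: at each leaf the queried bits witness the value of `f`. -/
def DTree.Determines {ι : Type*} [DecidableEq ι] (T : DTree ι)
    (f : (ι → Bool) → Bool) : Prop :=
  ∀ x, IsWitness f x (T.path x)

/-- A partition of the hypercube into subcubes, encoded by the map sending each point to
the code (fixed coordinates) of its part. -/
structure SubcubePartition (ι : Type*) where
  code : (ι → Bool) → (ι → Option Bool)
  self_mem : ∀ x i b, code x i = some b → x i = b
  compat : ∀ x y, (∀ i b, code x i = some b → y i = b) → code y = code x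

/-- Number of coordinates fixed by the subcube containing `x`. -/
def SubcubePartition.codim {ι : Type*} [Fintype ι] (P : SubcubePartition ι)
    (x : ι → Bool) : ℕ :=
  (Finset.univ.filter fun i => (P.code x i).isSome).card

/-- The partition determines `f`, i.e. `f` is constant on each part. -/
def SubcubePartition.Determines {ι : Type*} (P : SubcubePartition ι)
    (f : (ι → Bool) → Bool) : Prop :=
  ∀ x y, (∀ i b, P.code x i = some b → y i = b) → f y = f x

/-- Deterministic sensitivity. -/
def detSens {ι : Type*} [Fintype ι] [DecidableEq ι] (f : (ι → Bool) → Bool) : ℕ :=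
  Finset.univ.sup fun x => sensAt f x

/-- Deterministic block sensitivity. -/
def detBS {ι : Type*} [Fintype ι] [DecidableEq ι] (f : (ι → Bool) → Bool) : ℕ :=
  Finset.univ.sup fun x => bsAt f x

/-- Deterministic witness complexity. -/
def detWit {ι : Type*} [Fintype ι] [DecidableEq ι] (f : (ι → Bool) → Bool) : ℕ :=
  Finset.univ.sup fun x => witAt f x

/-- Deterministic subcube partition complexity. -/
def detSC {ι : Type*} [Fintype ι] (f : (ι → Bool) → Bool) : ℕ :=
  sInf {k | ∃ P : SubcubePartition ι, P.Determines f ∧ ∀ x, P.codim x ≤ k}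

/-- Deterministic algorithmic (decision tree) complexity. -/
def detAlg {ι : Type*} [Fintype ι] [DecidableEq ι] (f : (ι → Bool) → Bool) : ℕ :=
  sInf {k | ∃ T : DTree ι, T.Determines f ∧ ∀ x, (T.path x).card ≤ k}

/-- Weight of the configuration `x` under the product Bernoulli(p) measure `π_p`. -/
def wt {ι : Type*} [Fintype ι] (p : ℝ) (x : ι → Bool) : ℝ :=
  ∏ i, (if x i then p else 1 - p)

/-- Expectation under `π_p`. -/
def expec {ι : Type*} [Fintype ι] [DecidableEq ι] (p : ℝ) (g : (ι → Bool) → ℝ) : ℝ :=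
  ∑ x, wt p x * g x

/-- Distributional sensitivity. -/
def distSens {ι : Type*} [Fintype ι] [DecidableEq ι] (f : (ι → Bool) → Bool) (p : ℝ) : ℝ :=
  expec p fun x => (sensAt f x : ℝ)

/-- Distributional block sensitivity. -/
def distBS {ι : Type*} [Fintype ι] [DecidableEq ι] (f : (ι → Bool) → Bool) (p : ℝ) : ℝ :=
  expec p fun x => (bsAt f x : ℝ)

/-- Distributional witness complexity. -/
def distWit {ι : Type*} [Fintype ι] [DecidableEq ι] (f : (ι → Bool) → Bool) (p : ℝ) : ℝ :=
  expec p fun x => (witAt f x : ℝ)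

/-- Distributional subcube partition complexity. -/
def distSC {ι : Type*} [Fintype ι] [DecidableEq ι] (f : (ι → Bool) → Bool) (p : ℝ) : ℝ :=
  sInf {c | ∃ P : SubcubePartition ι, P.Determines f ∧
    c = expec p fun x => (P.codim x : ℝ)}

/-- Distributional algorithmic complexity. -/
def distAlg {ι : Type*} [Fintype ι] [DecidableEq ι] (f : (ι → Bool) → Bool) (p : ℝ) : ℝ :=
  sInf {c | ∃ T : DTree ι, T.Determines f ∧
    c = expec p fun x => ((T.path x).card : ℝ)}

/-- `μ x J` is the joint probability that the bits equal `x` and the random set equals `J`;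
the conditions say: the marginal of the bits is `π_p`, the random set is a.s. a witness set
for `f`, and the random set is local (conditionally on `{I = J}` and the bits on `J`, the
bits outside `J` are still i.i.d. Bernoulli(p)). -/
def IsLocalWitnessSystem {ι : Type*} [Fintype ι] [DecidableEq ι]
    (f : (ι → Bool) → Bool) (p : ℝ) (μ : (ι → Bool) → Finset ι → ℝ) : Prop :=
  (∀ x J, 0 ≤ μ x J) ∧
  (∀ x, ∑ J, μ x J = wt p x) ∧
  (∀ x J, μ x J ≠ 0 → IsWitness f x J) ∧
  (∀ (J : Finset ι) x y, (∀ i ∈ J, x i = y i) → μ x J * wt p y = μ y J * wt p x)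

/-- Distributional local witness complexity. -/
def distLocal {ι : Type*} [Fintype ι] [DecidableEq ι]
    (f : (ι → Bool) → Bool) (p : ℝ) : ℝ :=
  sInf {c | ∃ μ : (ι → Bool) → Finset ι → ℝ, IsLocalWitnessSystem f p μ ∧
    c = ∑ x, ∑ J, μ x J * (J.card : ℝ)}

/-!
Always `s_f(x) ≤ b_f(x)`, since the sensitive coordinates form disjoint sensitive singleton
blocks; as `π_p` charges every point, `b(f,π_p) = s(f,π_p)` forces `b_f = s_f` everywhere. Then
every sensitive block at `x` contains a coordinate sensitive at `x` (otherwise it could be added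
to those singletons). On a square `{z, z^i, z^j, z^{ij}}` this forbids a vertex whose value
differs from the other three (the block `{i, j}` at the opposite vertex would be sensitive
without sensitive coordinates), i.e. `f` has an even number of each value there; hence whether
`i` is sensitive does not change when another coordinate is flipped, so the set `S` of
sensitive coordinates is the same at every point and `f ⊕ χ_S` is constant. Conversely, a block
`B` is sensitive for `ε ⊕ χ_S` iff `|B ∩ S|` is odd, so disjoint sensitive blocks each meet `S`
and `b = s = |S|` at every point.
-/

open Finset

variable {ι : Type*}

section Expectation

variable [Fintype ι] {p : ℝ}

lemma wt_pos (hp0 : 0 < p) (hp1 : p < 1) (x : ι → Bool) : 0 < wt p x :=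
  prod_pos fun i _ => by split_ifs <;> linarith

lemma expec_eq_expec_iff [DecidableEq ι] (hp0 : 0 < p) (hp1 : p < 1) {g h : (ι → Bool) → ℝ}
    (hle : ∀ x, g x ≤ h x) : expec p g = expec p h ↔ g = h := by
  unfold expec
  rw [sum_eq_sum_iff_of_le fun x _ => mul_le_mul_of_nonneg_left (hle x) (wt_pos hp0 hp1 x).le,
    funext_iff]
  simp [mul_right_inj' (wt_pos hp0 hp1 _).ne']

end Expectation

variable [DecidableEq ι]

section Flip

@[simp]
lemma flipOn_empty (x : ι → Bool) : flipOn x ∅ = x := by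
  funext k
  simp [flipOn]

@[simp]
lemma flipOn_flipOn_self (x : ι → Bool) (B : Finset ι) : flipOn (flipOn x B) B = x := by
  funext k
  by_cases hk : k ∈ B <;> simp [flipOn, hk]

lemma flipOn_comm (x : ι → Bool) (A B : Finset ι) :
    flipOn (flipOn x A) B = flipOn (flipOn x B) A := by
  funext k
  by_cases hA : k ∈ A <;> by_cases hB : k ∈ B <;> simp [flipOn, hA, hB]

lemma flipOn_union_of_disjoint (x : ι → Bool) {A B : Finset ι} (h : Disjoint A B) :
    flipOn x (A ∪ B) = flipOn (flipOn x A) B := by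
  funext k
  by_cases hA : k ∈ A
  · simp [flipOn, hA, disjoint_left.1 h hA]
  · by_cases hB : k ∈ B <;> simp [flipOn, hA, hB]

lemma flipOn_insert (x : ι → Bool) {a : ι} {B : Finset ι} (ha : a ∉ B) :
    flipOn x (insert a B) = flipOn (flipOn x B) {a} := by
  rw [insert_eq, flipOn_union_of_disjoint x (disjoint_singleton_left.2 ha), flipOn_comm]

lemma flipOn_filter_ne [Fintype ι] (x y : ι → Bool) :
    flipOn x (univ.filter fun k => x k ≠ y k) = y := by
  funext k
  cases hx : x k <;> cases hy : y k <;> simp [flipOn, hx, hy]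

lemma apply_flipOn_eq_of_forall_singleton {β : Sort*} {g : (ι → Bool) → β}
    (hg : ∀ x i, g (flipOn x {i}) = g x) (x : ι → Bool) (B : Finset ι) :
    g (flipOn x B) = g x := by
  induction B using Finset.induction_on with
  | empty => rw [flipOn_empty]
  | insert a B ha ih => rw [flipOn_insert x ha, hg, ih]

lemma apply_eq_of_forall_flipOn_singleton [Fintype ι] {β : Sort*} {g : (ι → Bool) → β}
    (hg : ∀ x i, g (flipOn x {i}) = g x) (x y : ι → Bool) : g x = g y := by
  rw [← flipOn_filter_ne x y, apply_flipOn_eq_of_forall_singleton hg]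

end Flip

section BlockSensitivity

variable (f : (ι → Bool) → Bool) (x : ι → Bool)

lemma card_le_of_forall_inter_nonempty {m : ℕ} {B : Fin m → Finset ι} (S : Finset ι)
    (hmeet : ∀ j, (B j ∩ S).Nonempty) (hdisj : ∀ j k, j ≠ k → Disjoint (B j) (B k)) :
    m ≤ S.card := by
  choose a ha using hmeet
  have hinj : Set.InjOn a (univ : Finset (Fin m)) := fun j _ k _ hjk => by
    by_contra hne
    exact disjoint_left.1 (hdisj j k hne) (mem_inter.1 (ha j)).1 (hjk ▸ (mem_inter.1 (ha k)).1)
  simpa using card_le_card_of_injOn a (fun j _ => (mem_inter.1 (ha j)).2) hinj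

lemma bsAt_le_card (S : Finset ι) (hmeet : ∀ B, f (flipOn x B) ≠ f x → (B ∩ S).Nonempty) :
    bsAt f x ≤ S.card :=
  csSup_le ⟨0, Fin.elim0, fun j => j.elim0, fun j => j.elim0⟩ fun _ ⟨_, hB, hdisj⟩ =>
    card_le_of_forall_inter_nonempty S (fun j => hmeet _ (hB j)) hdisj

lemma pairwiseDisjoint_image_singleton (s : Finset ι) :
    ((s.image singleton : Finset (Finset ι)) : Set (Finset ι)).PairwiseDisjoint id := by
  rintro _ hA _ hB hne
  obtain ⟨i, -, rfl⟩ := mem_image.1 hA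
  obtain ⟨j, -, rfl⟩ := mem_image.1 hB
  exact disjoint_singleton.2 fun h => hne (h ▸ rfl)

variable [Fintype ι]

lemma card_le_bsAt (𝓑 : Finset (Finset ι)) (hsens : ∀ B ∈ 𝓑, f (flipOn x B) ≠ f x)
    (hdisj : (𝓑 : Set (Finset ι)).PairwiseDisjoint id) : 𝓑.card ≤ bsAt f x := by
  refine le_csSup ⟨(univ : Finset ι).card, ?_⟩ ⟨fun j => 𝓑.equivFin.symm j,
    fun j => hsens _ (𝓑.equivFin.symm j).2, fun j k hjk => hdisj (𝓑.equivFin.symm j).2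
      (𝓑.equivFin.symm k).2 fun h => hjk (𝓑.equivFin.symm.injective (Subtype.ext h))⟩
  rintro m ⟨B, hB, hdisj⟩
  refine card_le_of_forall_inter_nonempty univ (fun j => ?_) hdisj
  rw [inter_univ, nonempty_iff_ne_empty]
  intro hj
  exact hB j (by rw [hj, flipOn_empty])

def sensSet : Finset ι := univ.filter fun i => f (flipOn x {i}) ≠ f x

@[simp]
lemma mem_sensSet {i : ι} : i ∈ sensSet f x ↔ f (flipOn x {i}) ≠ f x := by
  simp [sensSet]

lemma card_sensSet : (sensSet f x).card = sensAt f x := rfl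

lemma sensAt_le_bsAt : sensAt f x ≤ bsAt f x := by
  rw [← card_sensSet, ← card_image_of_injective _ singleton_injective]
  exact card_le_bsAt f x _ (by simp) (pairwiseDisjoint_image_singleton _)

lemma exists_mem_sensitive_of_bsAt_le_sensAt (h : bsAt f x ≤ sensAt f x) {B : Finset ι}
    (hB : f (flipOn x B) ≠ f x) : ∃ i ∈ B, f (flipOn x {i}) ≠ f x := by
  by_contra! hc
  have hB_notMem : B ∉ (sensSet f x).image singleton := by
    rintro hB'
    obtain ⟨i, hi, rfl⟩ := mem_image.1 hB'
    exact (mem_sensSet f x).1 hi (hc i (mem_singleton_self i))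
  have hcard := card_le_bsAt f x (insert B ((sensSet f x).image singleton))
    (by simpa [forall_mem_insert] using hB) (by
      rw [coe_insert]
      refine (pairwiseDisjoint_image_singleton _).insert fun C hC _ => ?_
      obtain ⟨i, hi, rfl⟩ := mem_image.1 hC
      exact disjoint_singleton_right.2 fun hiB => (mem_sensSet f x).1 hi (hc i hiB))
  rw [card_insert_of_notMem hB_notMem, card_image_of_injective _ singleton_injective,
    card_sensSet] at hcard
  omega

end BlockSensitivity

section Square

variable {f : (ι → Bool) → Bool}

lemma apply_flipOn_flipOn_eq_of_forall_block {z : ι → Bool}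
    (hblock : ∀ B, f (flipOn z B) ≠ f z → ∃ k ∈ B, f (flipOn z {k}) ≠ f z) {i j : ι}
    (hij : i ≠ j) (hi : f (flipOn z {i}) = f z) (hj : f (flipOn z {j}) = f z) :
    f (flipOn (flipOn z {i}) {j}) = f z := by
  by_contra h
  rw [← flipOn_union_of_disjoint z (disjoint_singleton.2 hij)] at h
  obtain ⟨k, hk, hks⟩ := hblock _ h
  rcases mem_union.1 hk with hk | hk <;> rw [mem_singleton.1 hk] at hks
  exacts [hks hi, hks hj]

lemma sensitive_flipOn_iff_of_forall_block
    (hblock : ∀ x B, f (flipOn x B) ≠ f x → ∃ k ∈ B, f (flipOn x {k}) ≠ f x)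
    (x : ι → Bool) (i j : ι) :
    f (flipOn (flipOn x {j}) {i}) ≠ f (flipOn x {j}) ↔ f (flipOn x {i}) ≠ f x := by
  rcases eq_or_ne i j with rfl | hij
  · rw [flipOn_flipOn_self, ne_comm]
  have corner := fun z => apply_flipOn_flipOn_eq_of_forall_block (hblock z) hij
  have h₁ := corner x
  have h₂ := corner (flipOn x {i})
  have h₃ := apply_flipOn_flipOn_eq_of_forall_block (hblock (flipOn x {j})) hij.symm
  have h₄ := corner (flipOn (flipOn x {j}) {i})
  rw [flipOn_comm (flipOn x {j}) {i} {j}] at h₄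
  rw [flipOn_comm x {i} {j}] at h₁ h₂
  simp only [flipOn_flipOn_self] at h₁ h₂ h₃ h₄
  -- no corner of the square differs from the other three, so `f` changes along both `i`-edges
  -- or along neither
  revert h₁ h₂ h₃ h₄
  generalize f x = a, f (flipOn x {i}) = b, f (flipOn x {j}) = c,
    f (flipOn (flipOn x {j}) {i}) = d
  cases a <;> cases b <;> cases c <;> cases d <;> simp

lemma sensitive_iff_sensitive_of_forall_block [Fintype ι]
    (hblock : ∀ x B, f (flipOn x B) ≠ f x → ∃ k ∈ B, f (flipOn x {k}) ≠ f x)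
    (x y : ι → Bool) (i : ι) : f (flipOn x {i}) ≠ f x ↔ f (flipOn y {i}) ≠ f y :=
  Iff.of_eq <| apply_eq_of_forall_flipOn_singleton (g := fun z => f (flipOn z {i}) ≠ f z)
    (fun z j => propext (sensitive_flipOn_iff_of_forall_block hblock z i j)) x y

end Square

def parityOn (S : Finset ι) (x : ι → Bool) : Bool :=
  decide (Odd (S.filter fun i => x i = true).card)

section Parity

variable {S : Finset ι} {x : ι → Bool}

lemma parityOn_flipOn_of_disjoint {B : Finset ι} (h : Disjoint S B) :
    parityOn S (flipOn x B) = parityOn S x := by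
  unfold parityOn
  rw [filter_congr (q := fun i => x i = true) fun i hi => by simp [flipOn, disjoint_left.1 h hi]]

lemma parityOn_flipOn_singleton_of_mem {a : ι} (ha : a ∈ S) :
    parityOn S (flipOn x {a}) = !parityOn S x := by
  have hrest : parityOn (S.erase a) (flipOn x {a}) = parityOn (S.erase a) x :=
    parityOn_flipOn_of_disjoint (disjoint_singleton_right.2 (notMem_erase a S))
  unfold parityOn at hrest ⊢
  rw [← insert_erase ha, filter_insert, filter_insert]
  cases hxa : x a <;>
    simp_all [flipOn, card_insert_of_notMem, Nat.odd_add_one, -Nat.not_odd_iff_even]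

lemma parityOn_flipOn_singleton (a : ι) :
    parityOn S (flipOn x {a}) = xor (parityOn S x) (decide (a ∈ S)) := by
  by_cases ha : a ∈ S
  · simp [parityOn_flipOn_singleton_of_mem ha, ha]
  · simp [parityOn_flipOn_of_disjoint (disjoint_singleton_right.2 ha), ha]

end Parity

section ParityCharacterization

variable {f : (ι → Bool) → Bool}

lemma sensitive_iff_mem_of_eq_parityOn {S : Finset ι} {ε : Bool}
    (hf : ∀ x, f x = xor ε (parityOn S x)) (x : ι → Bool) (i : ι) :
    f (flipOn x {i}) ≠ f x ↔ i ∈ S := by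
  rw [hf, hf, parityOn_flipOn_singleton]
  by_cases hi : i ∈ S <;> simp [hi]

lemma inter_nonempty_of_eq_parityOn {S : Finset ι} {ε : Bool}
    (hf : ∀ x, f x = xor ε (parityOn S x)) {x : ι → Bool} {B : Finset ι}
    (hB : f (flipOn x B) ≠ f x) : (B ∩ S).Nonempty := by
  rw [nonempty_iff_ne_empty, Ne, ← disjoint_iff_inter_eq_empty]
  intro hdisj
  rw [hf, hf, parityOn_flipOn_of_disjoint hdisj.symm] at hB
  exact hB rfl

variable [Fintype ι]

lemma bsAt_eq_sensAt_of_eq_parityOn {S : Finset ι} {ε : Bool}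
    (hf : ∀ x, f x = xor ε (parityOn S x)) (x : ι → Bool) : bsAt f x = sensAt f x := by
  have hsens : sensSet f x = S := by
    ext i
    rw [mem_sensSet, sensitive_iff_mem_of_eq_parityOn hf]
  refine le_antisymm ?_ (sensAt_le_bsAt f x)
  rw [← card_sensSet, hsens]
  exact bsAt_le_card f x S fun _ hB => inter_nonempty_of_eq_parityOn hf hB

lemma exists_eq_parityOn_of_forall_block
    (hblock : ∀ x B, f (flipOn x B) ≠ f x → ∃ k ∈ B, f (flipOn x {k}) ≠ f x) :
    ∃ (S : Finset ι) (ε : Bool), ∀ x, f x = xor ε (parityOn S x) := by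
  set x₀ : ι → Bool := fun _ => false
  set S := sensSet f x₀
  have hflip : ∀ x a, f (flipOn x {a}) = xor (f x) (decide (a ∈ S)) := by
    intro x a
    have hsens : a ∈ S ↔ f (flipOn x {a}) ≠ f x :=
      (mem_sensSet f x₀).trans (sensitive_iff_sensitive_of_forall_block hblock x₀ x a)
    by_cases h : f (flipOn x {a}) = f x
    · simp [h, hsens]
    · simpa [hsens.2 h] using Bool.eq_not_of_ne h
  have hconst (x : ι → Bool) : xor (f x) (parityOn S x) = xor (f x₀) (parityOn S x₀) :=
    apply_eq_of_forall_flipOn_singleton (g := fun x => xor (f x) (parityOn S x)) (fun x a => by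
      rw [hflip, parityOn_flipOn_singleton]
      cases decide (a ∈ S) <;> simp) x x₀
  have hx₀ : parityOn S x₀ = false := by simp [parityOn, x₀]
  refine ⟨S, f x₀, fun x => ?_⟩
  rw [← Bool.xor_false (f x₀), ← hx₀, ← hconst x, Bool.xor_assoc, Bool.xor_self,
    Bool.xor_false]

end ParityCharacterization

/-- `b(f,π_p) = s(f,π_p)` iff `f` or `1 - f` is the parity function on some
subset of the bits, i.e. `f(x) = ε ⊕ (⊕_{i ∈ S} x_i)` for some `S ⊆ [n]`, `ε ∈ {0,1}`. -/
theorem bs_eq_sens_iff_parity (n : ℕ) (f : (Fin n → Bool) → Bool) (p : ℝ)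
    (hp0 : 0 < p) (hp1 : p < 1) :
    distBS f p = distSens f p ↔
      ∃ (S : Finset (Fin n)) (ε : Bool),
        ∀ x, f x = xor ε (decide (Odd (S.filter fun i => x i = true).card)) := by
  have hle (x : Fin n → Bool) : (sensAt f x : ℝ) ≤ bsAt f x := by
    exact_mod_cast sensAt_le_bsAt f x
  rw [distBS, distSens, eq_comm, expec_eq_expec_iff hp0 hp1 hle]
  constructor
  · intro h
    exact exists_eq_parityOn_of_forall_block fun x _ =>
      exists_mem_sensitive_of_bsAt_le_sensAt f x (by exact_mod_cast (congrFun h x).ge)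
  · rintro ⟨S, ε, hf⟩
    funext x
    exact_mod_cast (bsAt_eq_sensAt_of_eq_parityOn hf x).symm
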